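/- arXiv:1804.10190 — 5 statements merged into one kernel-verified Lean document; each statement's English description precedes it below -/
import Mathlib

section
/- For every real p with 0 < p < 1, the series Σ_{m=1}^∞ ((p^{m+1} − p^m)² / (p^{m+1} + p^m)) · ((m+1)/2) converges, and ((1−p)/p) · [ Σ_{m=1}^∞ ((p^{m+1} − p^m)² / (p^{m+1} + p^m)) · ((m+1)/2) + p/2 ] = (3/2) · (1−p)/(1+p). -/
/-- for `0 < p < 1`, the series
`Σ_{m=1}^∞ ((p^{m+1} − p^m)² / (p^{m+1} + p^m)) · ((m+1)/2)` converges and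
`((1−p)/p) · [Σ + p/2] = (3/2)(1−p)/(1+p)`. -/
theorem qfi_series_closed_form (p : ℝ) (hp0 : 0 < p) (hp1 : p < 1) :
    Summable (fun m : ℕ =>
      ((p ^ (m + 2) - p ^ (m + 1)) ^ 2 / (p ^ (m + 2) + p ^ (m + 1))) * (((m : ℝ) + 2) / 2)) ∧
    ((1 - p) / p) *
        ((∑' m : ℕ,
            ((p ^ (m + 2) - p ^ (m + 1)) ^ 2 / (p ^ (m + 2) + p ^ (m + 1))) *
              (((m : ℝ) + 2) / 2)) + p / 2) =
      (3 / 2) * (1 - p) / (1 + p) := by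
  have hp1' : (0:ℝ) < 1 + p := by linarith
  set c : ℝ := p * (1 - p) ^ 2 / (2 * (1 + p)) with hc
  have key : ∀ m : ℕ,
      ((p ^ (m + 2) - p ^ (m + 1)) ^ 2 / (p ^ (m + 2) + p ^ (m + 1))) * (((m : ℝ) + 2) / 2)
        = c * ((m : ℝ) * p ^ m) + (2 * c) * p ^ m := by
    intro m
    have hq : (0:ℝ) < p ^ (m + 1) := pow_pos hp0 _
    have h1 : p ^ (m + 2) = p ^ m * p * p := by ring
    have h2 : p ^ (m + 1) = p ^ m * p := by ring
    have hden : p ^ (m + 2) + p ^ (m + 1) = p ^ m * p * (p + 1) := by rw [h1, h2]; ring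
    rw [hden, hc, h1, h2]
    have hpm : (0:ℝ) < p ^ m := pow_pos hp0 _
    field_simp
    ring
  have hnorm : ‖p‖ < 1 := by rw [Real.norm_eq_abs, abs_of_pos hp0]; exact hp1
  have hs1 : Summable (fun m : ℕ => (m : ℝ) * p ^ m) := by
    have := summable_pow_mul_geometric_of_norm_lt_one (R := ℝ) 1 hnorm
    simpa using this
  have hs2 : Summable (fun m : ℕ => p ^ m) := summable_geometric_of_lt_one hp0.le hp1
  have hsum : Summable (fun m : ℕ =>
      ((p ^ (m + 2) - p ^ (m + 1)) ^ 2 / (p ^ (m + 2) + p ^ (m + 1))) * (((m : ℝ) + 2) / 2)) := by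
    have : Summable (fun m : ℕ => c * ((m : ℝ) * p ^ m) + (2 * c) * p ^ m) :=
      (hs1.mul_left c).add (hs2.mul_left (2 * c))
    exact this.congr fun m => (key m).symm
  refine ⟨hsum, ?_⟩
  have htsum : (∑' m : ℕ,
      ((p ^ (m + 2) - p ^ (m + 1)) ^ 2 / (p ^ (m + 2) + p ^ (m + 1))) * (((m : ℝ) + 2) / 2))
      = c * (p / (1 - p) ^ 2) + (2 * c) * (1 / (1 - p)) := by
    rw [tsum_congr key, Summable.tsum_add (hs1.mul_left c) (hs2.mul_left (2 * c)),
      tsum_mul_left, tsum_mul_left, tsum_coe_mul_geometric_of_norm_lt_one hnorm,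
      tsum_geometric_of_lt_one hp0.le hp1]
    ring
  rw [htsum, hc]
  have h1p : (1:ℝ) - p ≠ 0 := by linarith
  field_simp
  ring
end

section
/- Let v₊ ≥ v₋, y₊ ≥ y₋, and v'₊ ≥ v'₋ be real numbers and let η ∈ [0,1]. Then the following are equivalent: (i) there exist rotation matrices R_S, R_A ∈ SO(2) such that the real symmetric 2×2 matrix (1−η)·R_S diag(v₊,v₋) R_Sᵀ + η·R_A diag(y₊,y₋) R_Aᵀ has eigenvalues v'₊ and v'₋; (ii) v'₊ + v'₋ = (1−η)(v₊+v₋) + η(y₊+y₋), v'₊ ≤ (1−η)v₊ + η y₊, v'₋ ≤ (1−η)v₊ + η y₋, and v'₋ ≤ (1−η)v₋ + η y₊. -/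
/-!
Encode the traceless part of a real symmetric `2 × 2` matrix `M` as the complex number
`deviator M = (M₀₀ - M₁₁) + 2 M₀₁ i`; its norm is the gap between the two eigenvalues, so the spectrum of `M`
is fixed by its trace together with this norm. If `R` is the rotation by the unit complex number
`z`, then the traceless part of `R diag(p, m) Rᵀ` is `(p - m) z²`. For the matrix of the theorem,
the trace is therefore fixed, and the traceless part is `P z² + Q w²`, where
`P = (1 - η)(v₊ - v₋)` and `Q = η(y₊ - y₋)`. As `z` and `w` run over the unit circle, its norm
takes exactly the values in `[|P - Q|, P + Q]`: the triangle inequality gives one inclusion and the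
intermediate value theorem along `w = e^{iθ}` gives the other. Using the trace identity, the three
inequalities say precisely that `v'₊ - v'₋` lies in this interval.
-/

open Matrix Polynomial

theorem Complex.norm_eq_one_iff_normSq_eq_one (z : ℂ) : ‖z‖ = 1 ↔ Complex.normSq z = 1 := by
  rw [← Complex.sq_norm, pow_eq_one_iff_of_nonneg (norm_nonneg _) two_ne_zero]

section NormBounds

variable {E : Type*} [SeminormedAddCommGroup E] [NormedSpace ℝ E] {P Q : ℝ} {u v : E}

theorem abs_sub_le_norm_smul_add_smul (hP : 0 ≤ P) (hQ : 0 ≤ Q) (hu : ‖u‖ = 1)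
    (hv : ‖v‖ = 1) : |P - Q| ≤ ‖P • u + Q • v‖ := by
  have h := abs_norm_sub_norm_le (P • u) (-(Q • v))
  rwa [norm_neg, sub_neg_eq_add, norm_smul, norm_smul, hu, hv, Real.norm_of_nonneg hP,
    Real.norm_of_nonneg hQ, mul_one, mul_one] at h

theorem norm_smul_add_smul_le (hP : 0 ≤ P) (hQ : 0 ≤ Q) (hu : ‖u‖ = 1) (hv : ‖v‖ = 1) :
    ‖P • u + Q • v‖ ≤ P + Q :=
  calc ‖P • u + Q • v‖ ≤ ‖P • u‖ + ‖Q • v‖ := norm_add_le _ _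
    _ = P + Q := by
      rw [norm_smul, norm_smul, hu, hv, Real.norm_of_nonneg hP, Real.norm_of_nonneg hQ,
        mul_one, mul_one]

end NormBounds

theorem Complex.exists_norm_eq_one_and_norm_smul_add_smul_sq_eq {P Q g : ℝ} (hP : 0 ≤ P)
    (hQ : 0 ≤ Q) (hlow : |P - Q| ≤ g) (hupp : g ≤ P + Q) :
    ∃ z : ℂ, ‖z‖ = 1 ∧ ‖P • (1 : ℂ) + Q • z ^ 2‖ = g := by
  let f : ℝ → ℝ := fun θ => ‖P • (1 : ℂ) + Q • Complex.exp (θ * Complex.I) ^ 2‖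
  have hf : ContinuousOn f (Set.Icc 0 (Real.pi / 2)) := by fun_prop
  have hf₀ : f 0 = P + Q := by
    simp only [f, Complex.ofReal_zero, zero_mul, Complex.exp_zero, one_pow, Complex.real_smul,
      mul_one]
    rw [← Complex.ofReal_add, Complex.norm_real, Real.norm_of_nonneg (add_nonneg hP hQ)]
  have hf_pi_div_two : f (Real.pi / 2) = |P - Q| := by
    simp only [f, Complex.ofReal_div, Complex.ofReal_ofNat, Complex.exp_pi_div_two_mul_I,
      Complex.I_sq, Complex.real_smul, mul_one, mul_neg, ← sub_eq_add_neg]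
    rw [← Complex.ofReal_sub, Complex.norm_real, Real.norm_eq_abs]
  obtain ⟨θ, -, hθ⟩ := intermediate_value_Icc' (by positivity) hf
    (by rw [hf₀, hf_pi_div_two]; exact ⟨hlow, hupp⟩)
  exact ⟨_, Complex.norm_exp_ofReal_mul_I θ, hθ⟩

namespace Matrix

theorem charpoly_fin_two_eq_iff {R : Type*} [CommRing R] [Nontrivial R]
    (M : Matrix (Fin 2) (Fin 2) R) (a b : R) :
    M.charpoly = (X - C a) * (X - C b) ↔ M.trace = a + b ∧ M.det = a * b := by
  have hab : (X - C a) * (X - C b) = X ^ 2 - C (a + b) * X + C (a * b) := by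
    simp only [C_add, C_mul]; ring
  rw [charpoly_fin_two, hab]
  refine ⟨fun h => ⟨?_, ?_⟩, fun ⟨ht, hd⟩ => by rw [ht, hd]⟩
  · simpa using congrArg (- coeff · 1) h
  · simpa using congrArg (coeff · 0) h

theorem IsSymm.mul_mul_transpose {n R : Type*} [Fintype n] [CommSemiring R] {A : Matrix n n R}
    (hA : A.IsSymm) (B : Matrix n n R) : (B * A * Bᵀ).IsSymm := by
  rw [IsSymm, transpose_mul, transpose_mul, transpose_transpose, hA.eq, Matrix.mul_assoc]

theorem trace_mul_mul_transpose_of_transpose_mul_self {n R : Type*} [Fintype n]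
    [DecidableEq n] [CommSemiring R] {B : Matrix n n R} (hB : Bᵀ * B = 1) (A : Matrix n n R) :
    (B * A * Bᵀ).trace = A.trace := by
  rw [trace_mul_cycle, hB, Matrix.one_mul]

def rotationMatrix (z : ℂ) : Matrix (Fin 2) (Fin 2) ℝ := !![z.re, -z.im; z.im, z.re]

theorem mem_specialOrthogonalGroup_fin_two_iff_exists {R : Matrix (Fin 2) (Fin 2) ℝ} :
    R ∈ specialOrthogonalGroup (Fin 2) ℝ ↔ ∃ z : ℂ, ‖z‖ = 1 ∧ R = rotationMatrix z := by
  simp only [mem_specialOrthogonalGroup_fin_two_iff, Complex.norm_eq_one_iff_normSq_eq_one,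
    Complex.normSq_apply]
  constructor
  · rintro ⟨h00, h01, hnorm⟩
    refine ⟨⟨R 0 0, R 1 0⟩, by rw [h01] at hnorm; linear_combination hnorm, ?_⟩
    ext i j; fin_cases i <;> fin_cases j <;> simp [rotationMatrix, h00, h01]
  · rintro ⟨z, hz, rfl⟩
    exact ⟨rfl, rfl, by simp [rotationMatrix]; linear_combination hz⟩

def deviator : Matrix (Fin 2) (Fin 2) ℝ →ₗ[ℝ] ℂ where
  toFun M := ⟨M 0 0 - M 1 1, M 0 1 + M 1 0⟩
  map_add' M N := by apply Complex.ext <;> simp <;> ring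
  map_smul' r M := by apply Complex.ext <;> simp <;> ring

theorem normSq_deviator {M : Matrix (Fin 2) (Fin 2) ℝ} (hM : M.IsSymm) :
    Complex.normSq (deviator M) = M.trace ^ 2 - 4 * M.det := by
  simp only [deviator, LinearMap.coe_mk, AddHom.coe_mk, Complex.normSq_apply, trace_fin_two,
    det_fin_two]
  rw [hM.apply 0 1]; ring

theorem deviator_rotationMatrix_mul_diagonal_mul_transpose (z : ℂ) (p m : ℝ) :
    deviator (rotationMatrix z * diagonal ![p, m] * (rotationMatrix z)ᵀ) = (p - m) • z ^ 2 := by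
  apply Complex.ext <;>
    simp only [deviator, LinearMap.coe_mk, AddHom.coe_mk, mul_apply, Fin.sum_univ_two,
      diagonal_apply, transpose_apply] <;>
    simp [rotationMatrix, sq] <;> ring

theorem charpoly_eq_iff_trace_eq_and_norm_deviator_eq {M : Matrix (Fin 2) (Fin 2) ℝ}
    (hM : M.IsSymm) {a b : ℝ} (hab : b ≤ a) :
    M.charpoly = (X - C a) * (X - C b) ↔ M.trace = a + b ∧ ‖deviator M‖ = a - b := by
  rw [charpoly_fin_two_eq_iff, ← sq_eq_sq₀ (norm_nonneg _) (sub_nonneg.2 hab), Complex.sq_norm,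
    normSq_deviator hM]
  refine and_congr_right fun ht => ?_
  rw [ht]
  constructor
  · intro h; linear_combination (-4) * h
  · intro h; linear_combination (-1 / 4) * h

theorem charpoly_smul_conj_add_smul_conj_eq_iff {z w : ℂ} (hz : ‖z‖ = 1) (hw : ‖w‖ = 1)
    (s t p m q n : ℝ) {a b : ℝ} (hab : b ≤ a) :
    (s • (rotationMatrix z * diagonal ![p, m] * (rotationMatrix z)ᵀ) +
        t • (rotationMatrix w * diagonal ![q, n] * (rotationMatrix w)ᵀ)).charpoly =
      (X - C a) * (X - C b) ↔
    a + b = s * (p + m) + t * (q + n) ∧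
      ‖(s * (p - m)) • z ^ 2 + (t * (q - n)) • w ^ 2‖ = a - b := by
  have horth {u : ℂ} (hu : ‖u‖ = 1) : (rotationMatrix u)ᵀ * rotationMatrix u = 1 :=
    (mem_orthogonalGroup_iff' _ _).1
      (mem_specialOrthogonalGroup_fin_two_iff_exists.2 ⟨_, hu, rfl⟩).1
  have hsymm (u : ℂ) (d : Fin 2 → ℝ) :
      (rotationMatrix u * diagonal d * (rotationMatrix u)ᵀ).IsSymm :=
    (isSymm_diagonal d).mul_mul_transpose _
  rw [charpoly_eq_iff_trace_eq_and_norm_deviator_eq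
      (((hsymm z _).smul s).add ((hsymm w _).smul t)) hab,
    trace_add, trace_smul, trace_smul, trace_mul_mul_transpose_of_transpose_mul_self (horth hz),
    trace_mul_mul_transpose_of_transpose_mul_self (horth hw), map_add, map_smul, map_smul,
    deviator_rotationMatrix_mul_diagonal_mul_transpose,
    deviator_rotationMatrix_mul_diagonal_mul_transpose, smul_smul, smul_smul,
    eq_comm (a := a + b)]
  simp [trace_diagonal, Fin.sum_univ_two]

end Matrix

/-- eigenvalues of a convex combination of two rotated diagonal `2 × 2`
real symmetric matrices: the spectrum `(v'₊, v'₋)` is achievable by some rotations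
`R_S, R_A ∈ SO(2)` iff the trace identity and the three Weyl-type inequalities hold. -/
theorem two_dim_spectrum_of_sum (vp vm yp ym vp' vm' η : ℝ)
    (hv : vm ≤ vp) (hy : ym ≤ yp) (hv' : vm' ≤ vp')
    (hη0 : 0 ≤ η) (hη1 : η ≤ 1) :
    (∃ RS RA : Matrix (Fin 2) (Fin 2) ℝ,
        RSᵀ * RS = 1 ∧ RS.det = 1 ∧ RAᵀ * RA = 1 ∧ RA.det = 1 ∧
        ((1 - η) • (RS * Matrix.diagonal ![vp, vm] * RSᵀ) +
            η • (RA * Matrix.diagonal ![yp, ym] * RAᵀ)).charpoly =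
          (X - C vp') * (X - C vm')) ↔
      (vp' + vm' = (1 - η) * (vp + vm) + η * (yp + ym) ∧
       vp' ≤ (1 - η) * vp + η * yp ∧
       vm' ≤ (1 - η) * vp + η * ym ∧
       vm' ≤ (1 - η) * vm + η * yp) := by
  have hP : 0 ≤ (1 - η) * (vp - vm) := mul_nonneg (by linarith) (by linarith)
  have hQ : 0 ≤ η * (yp - ym) := mul_nonneg hη0 (by linarith)
  have hSO (R : Matrix (Fin 2) (Fin 2) ℝ) :
      Rᵀ * R = 1 ∧ R.det = 1 ↔ ∃ z : ℂ, ‖z‖ = 1 ∧ R = rotationMatrix z := by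
    rw [← mem_specialOrthogonalGroup_fin_two_iff_exists, mem_specialOrthogonalGroup_iff,
      mem_orthogonalGroup_iff']
  constructor
  · rintro ⟨RS, RA, hS, hdS, hA, hdA, hcp⟩
    obtain ⟨z, hz, rfl⟩ := (hSO RS).1 ⟨hS, hdS⟩
    obtain ⟨w, hw, rfl⟩ := (hSO RA).1 ⟨hA, hdA⟩
    obtain ⟨htr, hgap⟩ :=
      (charpoly_smul_conj_add_smul_conj_eq_iff hz hw _ _ _ _ _ _ hv').1 hcp
    have hz₂ : ‖z ^ 2‖ = 1 := by rw [norm_pow, hz, one_pow]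
    have hw₂ : ‖w ^ 2‖ = 1 := by rw [norm_pow, hw, one_pow]
    have hlow := abs_sub_le_norm_smul_add_smul hP hQ hz₂ hw₂
    have hupp := norm_smul_add_smul_le hP hQ hz₂ hw₂
    rw [hgap, abs_sub_le_iff] at hlow
    rw [hgap] at hupp
    refine ⟨htr, ?_, ?_, ?_⟩ <;> linarith
  · rintro ⟨htr, h₁, h₂, h₃⟩
    obtain ⟨w, hw, hgap⟩ := Complex.exists_norm_eq_one_and_norm_smul_add_smul_sq_eq hP hQ
      (g := vp' - vm') (abs_sub_le_iff.2 ⟨by linarith, by linarith⟩) (by linarith)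
    obtain ⟨hS, hdS⟩ := (hSO _).2 ⟨1, norm_one, rfl⟩
    obtain ⟨hA, hdA⟩ := (hSO _).2 ⟨w, hw, rfl⟩
    refine ⟨_, _, hS, hdS, hA, hdA, ?_⟩
    rw [charpoly_smul_conj_add_smul_conj_eq_iff norm_one hw _ _ _ _ _ _ hv', one_pow]
    exact ⟨htr, hgap⟩
end

section
/- Let η ∈ [0,1] and let v₊ ≥ v₋ > 0 with v₊ > 1/2. Define v'₋ := (1−η)v₋ + η/2 and v'₊ := v₊ / (1 − η + 2η v₊). Then 1 − 2v'₋ = (1−η)(1 − 2v₋) and 2 − 1/v'₊ = (1−η)(2 − 1/v₊); consequently, if η < 1 then (1 − 2v'₋)/(2 − 1/v'₊) = (1 − 2v₋)/(2 − 1/v₊). -/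
/-- the homodyne-plus-feed-forward map
`v₋ ↦ v'₋ = (1−η)v₋ + η/2`, `v₊ ↦ v'₊ = v₊/(1 − η + 2η v₊)` satisfies
`1 − 2v'₋ = (1−η)(1 − 2v₋)` and `2 − 1/v'₊ = (1−η)(2 − 1/v₊)`; hence for `η < 1` it
leaves the ratio `(1 − 2v₋)/(2 − 1/v₊)` (the measure `N₃`) invariant. -/
theorem N3_invariance (η vp vm : ℝ) (hη0 : 0 ≤ η) (hη1 : η ≤ 1)
    (h1 : 0 < vm) (h2 : vm ≤ vp) (h3 : 1 / 2 < vp) :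
    1 - 2 * ((1 - η) * vm + η / 2) = (1 - η) * (1 - 2 * vm) ∧
    2 - 1 / (vp / (1 - η + 2 * η * vp)) = (1 - η) * (2 - 1 / vp) ∧
    (η < 1 →
      (1 - 2 * ((1 - η) * vm + η / 2)) / (2 - 1 / (vp / (1 - η + 2 * η * vp))) =
        (1 - 2 * vm) / (2 - 1 / vp)) := by
  have hvp : (0:ℝ) < vp := lt_trans (by norm_num) h3
  have hd : (0:ℝ) < 1 - η + 2 * η * vp := by nlinarith
  have key : 2 - 1 / (vp / (1 - η + 2 * η * vp)) = (1 - η) * (2 - 1 / vp) := by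
    rw [one_div_div]
    field_simp
    ring
  refine ⟨by ring, key, fun hη => ?_⟩
  rw [key, show 1 - 2 * ((1 - η) * vm + η / 2) = (1 - η) * (1 - 2 * vm) by ring,
    mul_div_mul_left _ _ (by linarith : (1:ℝ) - η ≠ 0)]
end

section
/- Let (v₊, v₋) and (v'₊, v'₋) be single-mode Gaussian covariance spectra (v₊ ≥ v₋ > 0, v₊v₋ ≥ 1/4, and likewise for the primed pair). Then the following are equivalent: (i) N₁(v'₊,v'₋) ≤ N₁(v₊,v₋) and N₃(v'₊,v'₋) ≤ N₃(v₊,v₋); (ii) there exist η ∈ [0,1] and reals c₊ ≥ 0, c₋ ≥ 0 such that v'₊ = v₊/(1 − η + 2η v₊) + c₊ and v'₋ = (1−η)v₋ + η/2 + c₋. -/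
/-!
Under the protocol map `𝒢_η := (gpnVp η, gpnVm η)` both `N₁` and the denominator `2 − 1/v₊`
of `N₃` get multiplied by `1 − η`, so `𝒢_η` scales `N₁` by `1 − η` and keeps `N₃`; adding
noise only lowers `N₁` and raises `2 − 1/v₊`. Conversely, when the target is nonclassical,
`1 − η := N₁'/N₁` reproduces `v₋'` exactly, and then `N₃' ≤ N₃` says precisely that
`2 − 1/v₊' ≥ 2 − 1/gpnVp η v₊`, i.e. `v₊' ≥ gpnVp η v₊`; a classical target is reached from
the vacuum `𝒢_1(v₊, v₋) = (1/2, 1/2)` by noise alone.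
-/

/-- The nonclassicality measure `N₁(v₊, v₋) := max {1 − 2 v₋, 0}`. -/
noncomputable def N1 (vp vm : ℝ) : ℝ := max (1 - 2 * vm) 0

/-- The nonclassicality measure `N₃ := N₁ / (2 − 1/v₊)` for `v₊ > 1/2`, and `0` at `v₊ = 1/2`. -/
noncomputable def N3 (vp vm : ℝ) : ℝ :=
  if 1 / 2 < vp then N1 vp vm / (2 - 1 / vp) else 0

noncomputable def gpnVp (η vp : ℝ) : ℝ := vp / (1 - η + 2 * η * vp)

noncomputable def gpnVm (η vm : ℝ) : ℝ := (1 - η) * vm + η / 2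

lemma N1_nonneg (vp vm : ℝ) : 0 ≤ N1 vp vm := le_max_right _ _

lemma N1_pos_iff {vp vm : ℝ} : 0 < N1 vp vm ↔ vm < 1 / 2 := by
  rw [N1, lt_max_iff]
  constructor
  · rintro (h | h) <;> linarith
  · exact fun h => Or.inl (by linarith)

lemma N1_of_pos {vp vm : ℝ} (h : 0 < N1 vp vm) : N1 vp vm = 1 - 2 * vm :=
  max_eq_left (by linarith [N1_pos_iff.mp h])

lemma N1_le_N1 {vm vm' : ℝ} (h : vm ≤ vm') (vp vp' : ℝ) : N1 vp' vm' ≤ N1 vp vm :=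
  max_le_max_right 0 (by linarith)

lemma two_sub_one_div_pos {v : ℝ} (h : 1 / 2 < v) : 0 < 2 - 1 / v := by
  have : 1 / v < 2 := by rw [div_lt_iff₀ (by linarith)]; linarith
  linarith

lemma N3_eq_div {vp : ℝ} (h : 1 / 2 ≤ vp) (vm : ℝ) : N3 vp vm = N1 vp vm / (2 - 1 / vp) := by
  rcases h.lt_or_eq with h | rfl
  · exact if_pos h
  · norm_num [N3]

lemma N3_nonneg {vp : ℝ} (h : 1 / 2 ≤ vp) (vm : ℝ) : 0 ≤ N3 vp vm := by
  rw [N3_eq_div h]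
  exact div_nonneg (N1_nonneg _ _) (by rw [sub_nonneg, div_le_iff₀ (by linarith)]; linarith)

-- At `vp = 1/2` the denominator of `N₃` vanishes; `1/4 ≤ vp * vm` forces `N₁ = 0` there.
lemma N3_le_N3 {vp vm vp' vm' : ℝ} (hvp : 1 / 2 ≤ vp) (hvpvm : 1 / 4 ≤ vp * vm)
    (hp : vp ≤ vp') (hm : vm ≤ vm') : N3 vp' vm' ≤ N3 vp vm := by
  rw [N3_eq_div (hvp.trans hp), N3_eq_div hvp]
  rcases (N1_nonneg vp vm).eq_or_lt with h0 | hpos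
  · have : N1 vp' vm' = 0 := le_antisymm (h0 ▸ N1_le_N1 hm _ _) (N1_nonneg _ _)
    rw [this, ← h0, zero_div, zero_div]
  · have hvp' : 1 / 2 < vp := by nlinarith [N1_pos_iff.mp hpos]
    refine div_le_div₀ (N1_nonneg _ _) (N1_le_N1 hm _ _) (two_sub_one_div_pos hvp') ?_
    exact sub_le_sub_left (one_div_le_one_div_of_le (by linarith) hp) 2

section gpn

variable {η vp vm : ℝ}

lemma gpn_denom_pos (hη : 0 ≤ η) (hvp : 1 / 2 ≤ vp) : 0 < 1 - η + 2 * η * vp := by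
  nlinarith

lemma gpnVp_one (hvp : vp ≠ 0) : gpnVp 1 vp = 1 / 2 := by
  rw [gpnVp]; field_simp; ring

lemma gpnVm_one : gpnVm 1 vm = 1 / 2 := by
  rw [gpnVm]; ring

lemma gpnVp_pos (hη : 0 ≤ η) (hvp : 1 / 2 ≤ vp) : 0 < gpnVp η vp :=
  div_pos (by linarith) (gpn_denom_pos hη hvp)

lemma half_le_gpnVp (hη0 : 0 ≤ η) (hη1 : η ≤ 1) (hvp : 1 / 2 ≤ vp) : 1 / 2 ≤ gpnVp η vp := by
  rw [gpnVp, le_div_iff₀ (gpn_denom_pos hη0 hvp)]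
  nlinarith

lemma quarter_le_gpnVp_mul_gpnVm (hη0 : 0 ≤ η) (hη1 : η ≤ 1) (hvp : 1 / 2 ≤ vp)
    (hvpvm : 1 / 4 ≤ vp * vm) : 1 / 4 ≤ gpnVp η vp * gpnVm η vm := by
  rw [gpnVp, div_mul_eq_mul_div, le_div_iff₀ (gpn_denom_pos hη0 hvp), gpnVm]
  nlinarith [mul_nonneg (sub_nonneg.mpr hη1) (sub_nonneg.mpr hvpvm)]

lemma N1_gpnVm (hη : η ≤ 1) (a b : ℝ) : N1 a (gpnVm η vm) = (1 - η) * N1 b vm := by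
  rw [N1, N1, mul_max_of_nonneg _ _ (sub_nonneg.mpr hη), mul_zero, gpnVm]
  ring_nf

lemma two_sub_one_div_gpnVp (hvp : vp ≠ 0) :
    2 - 1 / gpnVp η vp = (1 - η) * (2 - 1 / vp) := by
  rw [gpnVp, one_div_div]
  field_simp
  ring

lemma N3_gpn_le (hη0 : 0 ≤ η) (hη1 : η ≤ 1) (hvp : 1 / 2 ≤ vp) :
    N3 (gpnVp η vp) (gpnVm η vm) ≤ N3 vp vm := by
  rw [N3_eq_div (half_le_gpnVp hη0 hη1 hvp), N3_eq_div hvp, N1_gpnVm hη1 _ vp,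
    two_sub_one_div_gpnVp (by linarith)]
  rcases eq_or_ne (1 - η) 0 with h | h
  · rw [h, zero_mul, zero_div]
    rw [← N3_eq_div hvp]
    exact N3_nonneg hvp vm
  · rw [mul_div_mul_left _ _ h]

end gpn

lemma exists_gpn_eq_of_N_le_of_N1_pos {vp vm vp' vm' : ℝ} (hvp : 1 / 2 ≤ vp)
    (hvpvm : 1 / 4 ≤ vp * vm) (hvp' : 1 / 2 ≤ vp') (hvpvm' : 1 / 4 ≤ vp' * vm')
    (hN1 : N1 vp' vm' ≤ N1 vp vm) (hN3 : N3 vp' vm' ≤ N3 vp vm) (hpos : 0 < N1 vp' vm') :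
    ∃ η, 0 ≤ η ∧ η ≤ 1 ∧ gpnVp η vp ≤ vp' ∧ gpnVm η vm = vm' := by
  have hpos₀ : 0 < N1 vp vm := hpos.trans_le hN1
  have hvp₀ : 1 / 2 < vp := by nlinarith [N1_pos_iff.mp hpos₀]
  have hvp₀' : 1 / 2 < vp' := by nlinarith [N1_pos_iff.mp hpos]
  set t := N1 vp' vm' / N1 vp vm with ht
  have ht0 : 0 < t := div_pos hpos hpos₀
  have hη0 : 0 ≤ 1 - t := by linarith [(div_le_one hpos₀).mpr hN1]
  refine ⟨1 - t, hη0, by linarith, ?_, ?_⟩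
  · have hcross : N1 vp' vm' * (2 - 1 / vp) ≤ N1 vp vm * (2 - 1 / vp') := by
      rw [N3_eq_div hvp', N3_eq_div hvp,
        div_le_div_iff₀ (two_sub_one_div_pos hvp₀') (two_sub_one_div_pos hvp₀)] at hN3
      linarith
    have : 2 - 1 / gpnVp (1 - t) vp ≤ 2 - 1 / vp' := by
      rw [two_sub_one_div_gpnVp (by linarith), sub_sub_cancel, ht, div_mul_eq_mul_div,
        div_le_iff₀ hpos₀]
      linarith
    rwa [← one_div_le_one_div (by linarith) (gpnVp_pos hη0 hvp), ← sub_le_sub_iff_left 2]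
  · have hN1eq : N1 vp' (gpnVm (1 - t) vm) = N1 vp' vm' := by
      rw [N1_gpnVm (by linarith) _ vp, sub_sub_cancel, ht, div_mul_cancel₀ _ hpos₀.ne']
    have := N1_of_pos (hN1eq ▸ hpos)
    rw [hN1eq, N1_of_pos hpos] at this
    linarith

lemma N_le_iff_exists_gpn_le {vp vm vp' vm' : ℝ} (hvp : 1 / 2 ≤ vp)
    (hvpvm : 1 / 4 ≤ vp * vm) (hvp' : 1 / 2 ≤ vp') (hvpvm' : 1 / 4 ≤ vp' * vm') :
    (N1 vp' vm' ≤ N1 vp vm ∧ N3 vp' vm' ≤ N3 vp vm) ↔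
      ∃ η, 0 ≤ η ∧ η ≤ 1 ∧ gpnVp η vp ≤ vp' ∧ gpnVm η vm ≤ vm' := by
  constructor
  · rintro ⟨hN1, hN3⟩
    rcases (N1_nonneg vp' vm').eq_or_lt with h0 | hpos
    · have hvm' : 1 / 2 ≤ vm' := not_lt.mp fun h => (N1_pos_iff.mpr h).ne h0
      refine ⟨1, zero_le_one, le_rfl, ?_, ?_⟩
      · rwa [gpnVp_one (by linarith)]
      · rwa [gpnVm_one]
    · obtain ⟨η, hη0, hη1, hp, hm⟩ :=
        exists_gpn_eq_of_N_le_of_N1_pos hvp hvpvm hvp' hvpvm' hN1 hN3 hpos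
      exact ⟨η, hη0, hη1, hp, hm.le⟩
  · rintro ⟨η, hη0, hη1, hp, hm⟩
    refine ⟨(N1_le_N1 hm vp vp').trans ?_, ?_⟩
    · rw [N1_gpnVm hη1 _ vp]
      nlinarith [N1_nonneg vp vm]
    · exact (N3_le_N3 (half_le_gpnVp hη0 hη1 hvp)
        (quarter_le_gpnVp_mul_gpnVm hη0 hη1 hvp hvpvm) hp hm).trans (N3_gpn_le hη0 hη1 hvp)

/-- single-mode Gaussian `𝒢𝒫_ℕ` conversion at the level of covariance
spectra: `N₁` and `N₃` do not increase iff the target spectrum is obtained from the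
source by the beam-splitter/homodyne/feed-forward map for some reflectivity `η ∈ [0,1]`,
followed by adding nonnegative classical noise `c₊, c₋` to the two principal quadratures. -/
theorem single_mode_GPN_conversion (vp vm vp' vm' : ℝ)
    (h1 : vm ≤ vp) (h2 : 0 < vm) (h3 : 1 / 4 ≤ vp * vm)
    (h1' : vm' ≤ vp') (h2' : 0 < vm') (h3' : 1 / 4 ≤ vp' * vm') :
    (N1 vp' vm' ≤ N1 vp vm ∧ N3 vp' vm' ≤ N3 vp vm) ↔
      ∃ η cp cm : ℝ,
        0 ≤ η ∧ η ≤ 1 ∧ 0 ≤ cp ∧ 0 ≤ cm ∧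
        vp' = vp / (1 - η + 2 * η * vp) + cp ∧
        vm' = (1 - η) * vm + η / 2 + cm := by
  have hvp : 1 / 2 ≤ vp := by nlinarith
  have hvp' : 1 / 2 ≤ vp' := by nlinarith
  rw [N_le_iff_exists_gpn_le hvp h3 hvp' h3']
  constructor
  · rintro ⟨η, hη0, hη1, hp, hm⟩
    exact ⟨η, vp' - gpnVp η vp, vm' - gpnVm η vm, hη0, hη1, sub_nonneg.mpr hp,
      sub_nonneg.mpr hm, by rw [gpnVp]; ring, by rw [gpnVm]; ring⟩
  · rintro ⟨η, cp, cm, hη0, hη1, hcp, hcm, rfl, rfl⟩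
    exact ⟨η, hη0, hη1, le_add_of_nonneg_right hcp, le_add_of_nonneg_right hcm⟩
end

section
/- Let n ≥ 1 and let V be a real symmetric 2n×2n matrix such that the complex Hermitian matrix V + (i/2)Ω is positive semidefinite, where Ω is the standard symplectic form. Then V + Ω V Ωᵀ − I is positive semidefinite, i.e., for every r ∈ ℝ^{2n}, rᵀ(V + Ω V Ωᵀ)r ≥ |r|². -/
/-!
Testing the uncertainty relation `V + (i/2)Ω ⪰ 0` on `z = r + iΩᵀr` and taking real parts gives
`rᵀVr + rᵀΩVΩᵀr ≥ ½ (rᵀΩΩᵀr − rᵀΩΩr) = |r|²`, since `ΩΩᵀ = 1` and `Ω² = −1`.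
-/

open Matrix ComplexOrder

/-- The standard symplectic form `Ω = ⊕ᵢ [[0,1],[-1,0]]` on `ℝ^{2n}`. -/
def Omega (n : ℕ) : Matrix (Fin (2 * n)) (Fin (2 * n)) ℝ :=
  Matrix.of fun i j =>
    if (i : ℕ) % 2 = 0 ∧ (j : ℕ) = (i : ℕ) + 1 then 1
    else if (j : ℕ) % 2 = 0 ∧ (i : ℕ) = (j : ℕ) + 1 then -1
    else 0

theorem Matrix.PosSemidef.sub_dotProduct_mulVec_div_two_le {ι : Type*} [Fintype ι]
    {A J : Matrix ι ι ℝ}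
    (h : (A.map Complex.ofReal + (Complex.I / 2) • J.map Complex.ofReal).PosSemidef)
    (x y : ι → ℝ) :
    (x ⬝ᵥ (J *ᵥ y) - y ⬝ᵥ (J *ᵥ x)) / 2 ≤ x ⬝ᵥ (A *ᵥ x) + y ⬝ᵥ (A *ᵥ y) := by
  let z : ι → ℂ := fun i => ⟨x i, y i⟩
  have hre : (star z ⬝ᵥ ((A.map Complex.ofReal + (Complex.I / 2) • J.map Complex.ofReal) *ᵥ z)).re
      = x ⬝ᵥ (A *ᵥ x) + y ⬝ᵥ (A *ᵥ y) - (x ⬝ᵥ (J *ᵥ y) - y ⬝ᵥ (J *ᵥ x)) / 2 := by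
    simp only [z, dotProduct, mulVec, Complex.re_sum, Complex.mul_re, Complex.mul_im,
      Matrix.add_apply, Matrix.smul_apply, map_apply, Pi.star_apply, Complex.star_def,
      Complex.conj_re, Complex.conj_im, Complex.add_re, Complex.add_im, Complex.ofReal_re,
      Complex.ofReal_im, smul_eq_mul, Complex.div_re, Complex.div_im, Complex.I_re, Complex.I_im,
      Finset.mul_sum, ← Finset.sum_sub_distrib, ← Finset.sum_add_distrib, Finset.sum_div]
    refine Finset.sum_congr rfl fun i _ => Finset.sum_congr rfl fun j _ => ?_
    norm_num
    ring
  have hnonneg := (Complex.nonneg_iff.mp (h.dotProduct_mulVec_nonneg z)).1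
  linarith

lemma Omega_transpose (n : ℕ) : (Omega n)ᵀ = -Omega n := by
  ext i j
  simp only [Omega, transpose_apply, Matrix.neg_apply, of_apply]
  split_ifs <;> first | omega | norm_num

lemma Omega_mul_self (n : ℕ) : Omega n * Omega n = -1 := by
  ext i j
  -- the only nonzero entry in row `i` of `Ω` sits in the column of the partner of `i`
  let k : ℕ := if (i : ℕ) % 2 = 0 then i + 1 else i - 1
  have hk : k < 2 * n := by
    have := i.isLt
    grind
  rw [mul_apply, Finset.sum_eq_single ⟨k, hk⟩]
  · simp only [Omega, of_apply, Matrix.neg_apply, Matrix.one_apply, Fin.ext_iff, k]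
    split_ifs <;> first | omega | norm_num
  · intro b _ hb
    rw [ne_eq, Fin.ext_iff] at hb
    simp only [Omega, of_apply, k] at hb ⊢
    split_ifs at hb ⊢ <;> first | omega | norm_num
  · simp

lemma Omega_mul_transpose (n : ℕ) : Omega n * (Omega n)ᵀ = 1 := by
  rw [Omega_transpose, mul_neg, Omega_mul_self, neg_neg]

lemma dotProduct_self_le_of_uncertainty {n : ℕ} {V : Matrix (Fin (2 * n)) (Fin (2 * n)) ℝ}
    (huncert : (V.map Complex.ofReal +
        (Complex.I / 2) • (Omega n).map Complex.ofReal).PosSemidef)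
    (r : Fin (2 * n) → ℝ) :
    r ⬝ᵥ r ≤ r ⬝ᵥ ((V + Omega n * V * (Omega n)ᵀ) *ᵥ r) := by
  have h := huncert.sub_dotProduct_mulVec_div_two_le r ((Omega n)ᵀ *ᵥ r)
  have hΩΩt : r ⬝ᵥ (Omega n *ᵥ ((Omega n)ᵀ *ᵥ r)) = r ⬝ᵥ r := by
    rw [mulVec_mulVec, Omega_mul_transpose, one_mulVec]
  have hΩtΩ : ((Omega n)ᵀ *ᵥ r) ⬝ᵥ (Omega n *ᵥ r) = -(r ⬝ᵥ r) := by
    rw [mulVec_transpose, ← dotProduct_mulVec, mulVec_mulVec, Omega_mul_self, neg_mulVec,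
      one_mulVec, dotProduct_neg]
  have hconj : ((Omega n)ᵀ *ᵥ r) ⬝ᵥ (V *ᵥ ((Omega n)ᵀ *ᵥ r)) =
      r ⬝ᵥ ((Omega n * V * (Omega n)ᵀ) *ᵥ r) := by
    rw [← mulVec_mulVec, ← mulVec_mulVec, dotProduct_mulVec r (Omega n), ← mulVec_transpose]
  rw [add_mulVec, dotProduct_add]
  linarith

theorem uncertainty_implies_W_posSemidef_general (n : ℕ)
    (V : Matrix (Fin (2 * n)) (Fin (2 * n)) ℝ) (hsym : Vᵀ = V)
    (huncert : (V.map Complex.ofReal +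
        (Complex.I / 2) • (Omega n).map Complex.ofReal).PosSemidef) :
    (V + Omega n * V * (Omega n)ᵀ - 1).PosSemidef ∧
    ∀ r : Fin (2 * n) → ℝ,
      (∑ i, r i ^ 2) ≤ r ⬝ᵥ ((V + Omega n * V * (Omega n)ᵀ) *ᵥ r) := by
  have hV : V.IsHermitian := by rwa [IsHermitian, conjTranspose_eq_transpose_of_trivial]
  have hW : (V + Omega n * V * (Omega n)ᵀ - 1).IsHermitian := by
    have := isHermitian_mul_mul_conjTranspose (Omega n) hV
    rw [conjTranspose_eq_transpose_of_trivial] at this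
    exact (hV.add this).sub isHermitian_one
  refine ⟨posSemidef_iff_dotProduct_mulVec.mpr ⟨hW, fun r => ?_⟩, fun r => ?_⟩
  · rw [star_trivial, sub_mulVec, dotProduct_sub, one_mulVec, sub_nonneg]
    exact dotProduct_self_le_of_uncertainty huncert r
  · simpa only [dotProduct, sq] using dotProduct_self_le_of_uncertainty huncert r

/-- if a real symmetric `V` satisfies the uncertainty relation
`V + (i/2)Ω ⪰ 0` (as a complex Hermitian matrix), then `V + Ω V Ωᵀ − I ⪰ 0`, i.e.
`rᵀ (V + Ω V Ωᵀ) r ≥ |r|²` for every `r ∈ ℝ^{2n}`. -/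
theorem uncertainty_implies_W_posSemidef (n : ℕ) (hn : 1 ≤ n)
    (V : Matrix (Fin (2 * n)) (Fin (2 * n)) ℝ) (hsym : Vᵀ = V)
    (huncert : (V.map Complex.ofReal +
        (Complex.I / 2) • (Omega n).map Complex.ofReal).PosSemidef) :
    (V + Omega n * V * (Omega n)ᵀ - 1).PosSemidef ∧
    ∀ r : Fin (2 * n) → ℝ,
      (∑ i, r i ^ 2) ≤ r ⬝ᵥ ((V + Omega n * V * (Omega n)ᵀ) *ᵥ r) :=
  uncertainty_implies_W_posSemidef_general n V hsym huncert
end
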